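/- arXiv:0704.1431 — 6 statements merged into one kernel-verified Lean document; each statement's English description precedes it below -/
import Mathlib

section
/- Let G be a finite simple graph and let F be a finite simple graph on vertex set V(F) that is a Schreier graph with connecting set S: S is a set of permutations of V(F) with S = S⁻¹ and A(F) = Σ_{s∈S} P(s). Let φ be a voltage assignment on G with values in Aut(F), and let Γ be a subgroup of the symmetric group on V(F) containing all values of φ and all elements of S. Let ρ₁, …, ρ_ℓ be group homomorphisms from Γ to the invertible complex f_i×f_i matrices, let m₁, …, m_ℓ be nonnegative integers with Σᵢ mᵢfᵢ = |V(F)|, and suppose M is an invertible complex V(F)×V(F) matrix such that for every γ ∈ Γ, M⁻¹P(γ)M = ⊕_{i=1}^{ℓ} (I_{mᵢ} ⊗ ρᵢ(γ)). Then for every complex number μ, (M ⊗ I_{V(G)})⁻¹ (A(G×^φF) − μ·D(G×^φF)) (M ⊗ I_{V(G)}) = ⊕_{i=1}^{ℓ} I_{mᵢ} ⊗ ( Σ_{γ∈Γ} ρᵢ(γ) ⊗ A(G_{φ,γ}) − μ·I_{fᵢ} ⊗ (D(G) + |S|·I_{V(G)}) + (Σ_{s∈S} ρᵢ(s)) ⊗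 I_{V(G)} ), where vertices of G×^φF are indexed by pairs (v,u) with v ∈ V(F), u ∈ V(G). -/
open Matrix BigOperators Kronecker
open scoped Classical

noncomputable section

variable {α β : Type*}

def adjM [Fintype α] (G : SimpleGraph α) : Matrix α α ℂ :=
  Matrix.of fun u v => if G.Adj u v then (1 : ℂ) else 0

def degM [Fintype α] (G : SimpleGraph α) : Matrix α α ℂ :=
  Matrix.diagonal fun v => ((G.neighborSet v).ncard : ℂ)

def Fpoly [Fintype α] (G : SimpleGraph α) (lam mu : ℂ) : ℂ :=
  (lam • (1 : Matrix α α ℂ) - (adjM G - mu • degM G)).det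

def permM (γ : Equiv.Perm β) : Matrix β β ℂ :=
  Matrix.of fun v w => if γ v = w then (1 : ℂ) else 0

def voltM [Fintype α] (G : SimpleGraph α) (φ : α → α → Equiv.Perm β) (γ : Equiv.Perm β) :
    Matrix α α ℂ :=
  Matrix.of fun u₁ u₂ => if G.Adj u₁ u₂ ∧ φ u₁ u₂ = γ then (1 : ℂ) else 0

def autPerm (F : SimpleGraph β) : Subgroup (Equiv.Perm β) where
  carrier := {γ | ∀ a b, F.Adj (γ a) (γ b) ↔ F.Adj a b}
  one_mem' := by intro a b; simp
  mul_mem' := by intro γ δ hγ hδ a b; simp [Equiv.Perm.mul_apply, hγ _ _, hδ _ _]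
  inv_mem' := by intro γ hγ a b; simpa using (hγ (γ⁻¹ a) (γ⁻¹ b)).symm

def bundle (G : SimpleGraph α) (F : SimpleGraph β) (φ : α → α → Equiv.Perm β)
    (hsym : ∀ u₁ u₂, G.Adj u₁ u₂ → φ u₂ u₁ = (φ u₁ u₂)⁻¹) : SimpleGraph (β × α) where
  Adj p q := (G.Adj p.2 q.2 ∧ q.1 = φ p.2 q.2 p.1) ∨ (p.2 = q.2 ∧ F.Adj p.1 q.1)
  symm := by
    constructor
    rintro ⟨v₁, u₁⟩ ⟨v₂, u₂⟩ hadj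
    dsimp only at hadj ⊢
    rcases hadj with ⟨h, rfl⟩ | ⟨rfl, h⟩
    · left
      refine ⟨h.symm, ?_⟩
      rw [hsym _ _ h]
      simp
    · right
      exact ⟨rfl, h.symm⟩
  loopless := by
    constructor
    rintro ⟨v, u⟩ hadj
    dsimp only at hadj
    rcases hadj with ⟨h, _⟩ | ⟨_, h⟩
    · exact G.irrefl h
    · exact F.irrefl h

def dsum [Fintype α] (B : β → Matrix α α ℂ) : Matrix (β × α) (β × α) ℂ :=
  Matrix.of fun p q => if p.1 = q.1 then B p.1 p.2 q.2 else 0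

def bigE {ℓ : ℕ} {f m : Fin ℓ → ℕ} (e : β ≃ Σ i : Fin ℓ, Fin (m i) × Fin (f i)) (α : Type*) :
    β × α ≃ Σ i : Fin ℓ, Fin (m i) × (Fin (f i) × α) :=
  (e.prodCongr (Equiv.refl α)).trans
    ((Equiv.sigmaProdDistrib _ _).trans (Equiv.sigmaCongrRight fun _ => Equiv.prodAssoc _ _ _))


/-!
The adjacency matrix of the bundle splits as `∑ γ, P(γ) ⊗ A(G_{φ,γ}) + A(F) ⊗ I`, and since `F`
is `|S|`-regular its degree matrix is `I ⊗ (D(G) + |S| I)`. Conjugation by `M ⊗ I` only touches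
the left Kronecker factors, all of which are permutation matrices `P(γ)` with `γ ∈ Γ`: besides the
voltages, `A(F) = ∑ s ∈ S, P(s)` and `I = P(1)`. By hypothesis each of them becomes
`⊕ᵢ I_{mᵢ} ⊗ ρᵢ(γ)`, and `(⊕ᵢ I_{mᵢ} ⊗ Cᵢ) ⊗ Y` is `⊕ᵢ I_{mᵢ} ⊗ (Cᵢ ⊗ Y)` up to the
reindexing `bigE`. Both sides of the claimed identity are therefore the same linear combination.
-/

namespace Matrix

lemma sum_kronecker {R ι l m n p : Type*} [NonUnitalNonAssocSemiring R] (t : Finset ι)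
    (A : ι → Matrix l m R) (B : Matrix n p R) :
    (∑ x ∈ t, A x) ⊗ₖ B = ∑ x ∈ t, A x ⊗ₖ B := by
  ext ⟨i, j⟩ ⟨k, l⟩
  simp [Matrix.sum_apply, Finset.sum_mul]

lemma inv_kronecker_one_mul_kronecker_mul {R : Type*} [CommRing R] [Fintype α] [Fintype β]
    (M X : Matrix β β R) (Y : Matrix α α R) :
    (M ⊗ₖ (1 : Matrix α α R))⁻¹ * (X ⊗ₖ Y) * (M ⊗ₖ 1) = (M⁻¹ * X * M) ⊗ₖ Y := by
  rw [inv_kronecker, inv_one, ← mul_kronecker_mul, ← mul_kronecker_mul, one_mul, mul_one]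

end Matrix

lemma permM_one : permM (1 : Equiv.Perm β) = 1 := by
  ext v w
  by_cases h : v = w <;> simp [permM, one_apply, h]

lemma ncard_neighborSet_eq_sum_adjM [Fintype α] (G : SimpleGraph α) (u : α) :
    ((G.neighborSet u).ncard : ℂ) = ∑ v, adjM G u v := by
  simp [adjM, Finset.sum_boole, Set.ncard_eq_toFinset_card']

lemma degM_eq_card_smul_one_of_adjM_eq_sum_permM [Fintype β] {F : SimpleGraph β}
    {S : Finset (Equiv.Perm β)} (hS : adjM F = ∑ s ∈ S, permM s) :
    degM F = (S.card : ℂ) • (1 : Matrix β β ℂ) := by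
  have hdeg (v : β) : ((F.neighborSet v).ncard : ℂ) = S.card := by
    rw [ncard_neighborSet_eq_sum_adjM, hS]
    simp only [Matrix.sum_apply, permM, of_apply]
    rw [Finset.sum_comm]
    simp
  rw [degM, funext hdeg, smul_one_eq_diagonal]

section Bundle

variable (G : SimpleGraph α) (F : SimpleGraph β) (φ : α → α → Equiv.Perm β)
  (hsym : ∀ u₁ u₂, G.Adj u₁ u₂ → φ u₂ u₁ = (φ u₁ u₂)⁻¹)

lemma neighborSet_bundle (v : β) (u : α) :
    (bundle G F φ hsym).neighborSet (v, u) =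
      (fun w => (w, u)) '' F.neighborSet v ∪ (fun u' => (φ u u' v, u')) '' G.neighborSet u := by
  ext ⟨w, u'⟩
  simp only [bundle, SimpleGraph.mem_neighborSet, Set.mem_union, Set.mem_image, Prod.mk.injEq]
  constructor
  · rintro (⟨h, rfl⟩ | ⟨rfl, h⟩)
    · exact Or.inr ⟨u', h, rfl, rfl⟩
    · exact Or.inl ⟨w, h, rfl, rfl⟩
  · rintro (⟨w, h, rfl, rfl⟩ | ⟨u', h, rfl, rfl⟩)
    · exact Or.inr ⟨rfl, h⟩
    · exact Or.inl ⟨h, rfl⟩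

lemma ncard_neighborSet_bundle [Finite α] [Finite β] (v : β) (u : α) :
    ((bundle G F φ hsym).neighborSet (v, u)).ncard =
      (F.neighborSet v).ncard + (G.neighborSet u).ncard := by
  rw [neighborSet_bundle, Set.ncard_union_eq, Set.ncard_image_of_injective,
    Set.ncard_image_of_injective]
  · intro u₁ u₂ h
    exact (Prod.mk.inj h).2
  · intro w₁ w₂ h
    exact (Prod.mk.inj h).1
  · rw [Set.disjoint_left]
    rintro _ ⟨w, -, rfl⟩ ⟨u', hu', h⟩
    exact G.ne_of_adj hu' (Prod.mk.inj h).2.symm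

lemma degM_bundle [Fintype α] [Fintype β] :
    degM (bundle G F φ hsym) = degM F ⊗ₖ (1 : Matrix α α ℂ) + (1 : Matrix β β ℂ) ⊗ₖ degM G := by
  ext ⟨v₁, u₁⟩ ⟨v₂, u₂⟩
  by_cases hv : v₁ = v₂ <;> by_cases hu : u₁ = u₂ <;>
    simp [degM, one_apply, hv, hu, ncard_neighborSet_bundle]

lemma sum_mul_voltM_apply [Fintype α] [Fintype β] {Γ : Subgroup (Equiv.Perm β)}
    (hφΓ : ∀ u₁ u₂, G.Adj u₁ u₂ → φ u₁ u₂ ∈ Γ) (g : Equiv.Perm β → ℂ) (u₁ u₂ : α) :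
    ∑ γ : Γ, g γ * voltM G φ γ u₁ u₂ = if G.Adj u₁ u₂ then g (φ u₁ u₂) else 0 := by
  by_cases hG : G.Adj u₁ u₂
  · rw [if_pos hG, Fintype.sum_eq_single ⟨φ u₁ u₂, hφΓ u₁ u₂ hG⟩]
    · simp [voltM, hG]
    · intro γ hγ
      have : φ u₁ u₂ ≠ γ := fun h => hγ (Subtype.ext h.symm)
      simp [voltM, this]
  · simp [voltM, hG]

lemma adjM_bundle [Fintype α] [Fintype β] {Γ : Subgroup (Equiv.Perm β)}
    (hφΓ : ∀ u₁ u₂, G.Adj u₁ u₂ → φ u₁ u₂ ∈ Γ) :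
    adjM (bundle G F φ hsym) =
      ∑ γ : Γ, permM (γ : Equiv.Perm β) ⊗ₖ voltM G φ γ + adjM F ⊗ₖ (1 : Matrix α α ℂ) := by
  ext ⟨v₁, u₁⟩ ⟨v₂, u₂⟩
  simp only [Matrix.add_apply, Matrix.sum_apply, kroneckerMap_apply,
    sum_mul_voltM_apply G φ hφΓ (fun γ => permM γ v₁ v₂)]
  by_cases hG : G.Adj u₁ u₂
  · simp [adjM, bundle, permM, hG, G.ne_of_adj hG, eq_comm]
  · by_cases hu : u₁ = u₂ <;> simp [adjM, bundle, hG, hu, one_apply]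

end Bundle

section Blocks

variable {ℓ : ℕ} {f m : Fin ℓ → ℕ}

lemma bigE_apply (e : β ≃ Σ i : Fin ℓ, Fin (m i) × Fin (f i)) (v : β) (u : α) :
    bigE e α (v, u) = ⟨(e v).1, (e v).2.1, (e v).2.2, u⟩ := rfl

def isotypicBlocks (R : Type*) [CommSemiring R] (e : β ≃ Σ i : Fin ℓ, Fin (m i) × Fin (f i))
    (α : Type*) :
    (∀ i, Matrix (Fin (f i) × α) (Fin (f i) × α) R) →ₗ[R] Matrix (β × α) (β × α) R where
  toFun C := reindex (bigE e α).symm (bigE e α).symm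
    (blockDiagonal' fun i => (1 : Matrix (Fin (m i)) (Fin (m i)) R) ⊗ₖ C i)
  map_add' C D := by
    ext p q
    simp only [reindex_apply, submatrix_apply, Matrix.add_apply, blockDiagonal'_apply]
    split <;> simp [mul_add]
  map_smul' c C := by
    ext p q
    simp only [reindex_apply, submatrix_apply, Matrix.smul_apply, blockDiagonal'_apply]
    split
    · simp only [Pi.smul_apply, kroneckerMap_apply, Matrix.smul_apply, smul_eq_mul,
        RingHom.id_apply]
      ring
    · simp

variable {R : Type*} [CommSemiring R]

lemma isotypicBlocks_apply (e : β ≃ Σ i : Fin ℓ, Fin (m i) × Fin (f i))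
    (C : ∀ i, Matrix (Fin (f i) × α) (Fin (f i) × α) R) :
    isotypicBlocks R e α C = reindex (bigE e α).symm (bigE e α).symm
      (blockDiagonal' fun i => (1 : Matrix (Fin (m i)) (Fin (m i)) R) ⊗ₖ C i) := rfl

lemma isotypicBlocks_kronecker (e : β ≃ Σ i : Fin ℓ, Fin (m i) × Fin (f i))
    (C : ∀ i, Matrix (Fin (f i)) (Fin (f i)) R) (Y : Matrix α α R) :
    isotypicBlocks R e α (fun i => C i ⊗ₖ Y) =
      (reindex e e).symm (blockDiagonal' fun i => (1 : Matrix (Fin (m i)) (Fin (m i)) R) ⊗ₖ C i)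
        ⊗ₖ Y := by
  ext ⟨v₁, u₁⟩ ⟨v₂, u₂⟩
  simp only [isotypicBlocks_apply, reindex_symm, reindex_apply, submatrix_apply, Equiv.symm_symm,
    kroneckerMap_apply, bigE_apply]
  obtain ⟨i₁, a₁, b₁⟩ := e v₁
  obtain ⟨i₂, a₂, b₂⟩ := e v₂
  by_cases h : i₁ = i₂
  · subst h
    simp only [blockDiagonal'_apply_eq, kroneckerMap_apply, mul_assoc]
  · simp only [blockDiagonal'_apply_ne _ _ _ h, zero_mul]

end Blocks

theorem bundle_matrix_similarity_schreier_general
    {α β : Type*} [Fintype α] [Fintype β]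
    (G : SimpleGraph α) (F : SimpleGraph β)
    (S : Finset (Equiv.Perm β))
    (hSchreier : adjM F = ∑ s ∈ S, permM s)
    (φ : α → α → Equiv.Perm β)
    (hsym : ∀ u₁ u₂, G.Adj u₁ u₂ → φ u₂ u₁ = (φ u₁ u₂)⁻¹)
    (Γ : Subgroup (Equiv.Perm β))
    (hφΓ : ∀ u₁ u₂, G.Adj u₁ u₂ → φ u₁ u₂ ∈ Γ)
    (hSΓ : ∀ s ∈ S, s ∈ Γ)
    (ℓ : ℕ) (f m : Fin ℓ → ℕ) (ρ : ∀ i : Fin ℓ, Γ →* GL (Fin (f i)) ℂ)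
    (e : β ≃ Σ i : Fin ℓ, Fin (m i) × Fin (f i))
    (M : Matrix β β ℂ)
    (hP : ∀ γ : Γ, Matrix.reindex e e (M⁻¹ * permM (γ : Equiv.Perm β) * M)
        = Matrix.blockDiagonal' fun i =>
            (1 : Matrix (Fin (m i)) (Fin (m i)) ℂ)
              ⊗ₖ (ρ i γ : Matrix (Fin (f i)) (Fin (f i)) ℂ))
    (μ : ℂ) :
    (M ⊗ₖ (1 : Matrix α α ℂ))⁻¹
        * (adjM (bundle G F φ hsym) - μ • degM (bundle G F φ hsym))
        * (M ⊗ₖ (1 : Matrix α α ℂ))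
      = Matrix.reindex (bigE e α).symm (bigE e α).symm
          (Matrix.blockDiagonal' fun i =>
            (1 : Matrix (Fin (m i)) (Fin (m i)) ℂ) ⊗ₖ
              ((∑ γ : Γ, (ρ i γ : Matrix (Fin (f i)) (Fin (f i)) ℂ)
                  ⊗ₖ voltM G φ (γ : Equiv.Perm β))
                - μ • ((1 : Matrix (Fin (f i)) (Fin (f i)) ℂ)
                    ⊗ₖ (degM G + (S.card : ℂ) • (1 : Matrix α α ℂ)))
                + (∑ s ∈ S.attach,
                    (ρ i ⟨(s : Equiv.Perm β), hSΓ s s.2⟩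
                      : Matrix (Fin (f i)) (Fin (f i)) ℂ))
                  ⊗ₖ (1 : Matrix α α ℂ))) := by
  set Z := degM G + (S.card : ℂ) • (1 : Matrix α α ℂ)
  have hblock (γ : Γ) (Y : Matrix α α ℂ) :
      isotypicBlocks ℂ e α (fun i => (ρ i γ : Matrix (Fin (f i)) (Fin (f i)) ℂ) ⊗ₖ Y) =
        (M ⊗ₖ (1 : Matrix α α ℂ))⁻¹ * (permM (γ : Equiv.Perm β) ⊗ₖ Y) * (M ⊗ₖ 1) := by
    rw [isotypicBlocks_kronecker, ← hP γ, Equiv.symm_apply_apply,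
      inv_kronecker_one_mul_kronecker_mul]
  have hone : isotypicBlocks ℂ e α (fun i => (1 : Matrix (Fin (f i)) (Fin (f i)) ℂ) ⊗ₖ Z) =
      (M ⊗ₖ (1 : Matrix α α ℂ))⁻¹ * ((1 : Matrix β β ℂ) ⊗ₖ Z) * (M ⊗ₖ 1) := by
    simpa [permM_one] using hblock 1 Z
  have hdeg : degM (bundle G F φ hsym) = (1 : Matrix β β ℂ) ⊗ₖ Z := by
    rw [degM_bundle, degM_eq_card_smul_one_of_adjM_eq_sum_permM hSchreier, smul_kronecker,
      one_kronecker_one, kronecker_add, kronecker_smul, one_kronecker_one, add_comm]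
  rw [adjM_bundle G F φ hsym hφΓ, hdeg, hSchreier, ← isotypicBlocks_apply]
  simp only [sum_kronecker, ← Pi.add_def, ← Pi.sub_def, ← Pi.smul_def, ← Finset.sum_fn, map_add,
    map_sub, map_smul, map_sum, hblock, hone]
  simp only [Matrix.mul_add, Matrix.add_mul, Matrix.mul_sub, Matrix.sub_mul, Matrix.mul_smul,
    Matrix.smul_mul, Finset.mul_sum, Finset.sum_mul]
  rw [Finset.sum_attach S (fun s => (M ⊗ₖ (1 : Matrix α α ℂ))⁻¹ * (permM s ⊗ₖ 1) * (M ⊗ₖ 1))]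
  abel

theorem bundle_matrix_similarity_schreier
    {α β : Type*} [Fintype α] [Fintype β]
    (G : SimpleGraph α) (F : SimpleGraph β)
    (S : Finset (Equiv.Perm β)) (hSinv : ∀ s ∈ S, s⁻¹ ∈ S)
    (hSchreier : adjM F = ∑ s ∈ S, permM s)
    (φ : α → α → Equiv.Perm β)
    (hsym : ∀ u₁ u₂, G.Adj u₁ u₂ → φ u₂ u₁ = (φ u₁ u₂)⁻¹)
    (hAut : ∀ u₁ u₂, G.Adj u₁ u₂ → φ u₁ u₂ ∈ autPerm F)
    (Γ : Subgroup (Equiv.Perm β))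
    (hφΓ : ∀ u₁ u₂, G.Adj u₁ u₂ → φ u₁ u₂ ∈ Γ)
    (hSΓ : ∀ s ∈ S, s ∈ Γ)
    (ℓ : ℕ) (f m : Fin ℓ → ℕ) (ρ : ∀ i : Fin ℓ, Γ →* GL (Fin (f i)) ℂ)
    (hsum : ∑ i, m i * f i = Fintype.card β)
    (e : β ≃ Σ i : Fin ℓ, Fin (m i) × Fin (f i))
    (M : Matrix β β ℂ) (hM : IsUnit M.det)
    (hP : ∀ γ : Γ, Matrix.reindex e e (M⁻¹ * permM (γ : Equiv.Perm β) * M)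
        = Matrix.blockDiagonal' fun i =>
            (1 : Matrix (Fin (m i)) (Fin (m i)) ℂ)
              ⊗ₖ (ρ i γ : Matrix (Fin (f i)) (Fin (f i)) ℂ))
    (μ : ℂ) :
    (M ⊗ₖ (1 : Matrix α α ℂ))⁻¹
        * (adjM (bundle G F φ hsym) - μ • degM (bundle G F φ hsym))
        * (M ⊗ₖ (1 : Matrix α α ℂ))
      = Matrix.reindex (bigE e α).symm (bigE e α).symm
          (Matrix.blockDiagonal' fun i =>
            (1 : Matrix (Fin (m i)) (Fin (m i)) ℂ) ⊗ₖ
              ((∑ γ : Γ, (ρ i γ : Matrix (Fin (f i)) (Fin (f i)) ℂ)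
                  ⊗ₖ voltM G φ (γ : Equiv.Perm β))
                - μ • ((1 : Matrix (Fin (f i)) (Fin (f i)) ℂ)
                    ⊗ₖ (degM G + (S.card : ℂ) • (1 : Matrix α α ℂ)))
                + (∑ s ∈ S.attach,
                    (ρ i ⟨(s : Equiv.Perm β), hSΓ s s.2⟩
                      : Matrix (Fin (f i)) (Fin (f i)) ℂ))
                  ⊗ₖ (1 : Matrix α α ℂ))) :=
  bundle_matrix_similarity_schreier_general G F S hSchreier φ hsym Γ hφΓ hSΓ ℓ f m ρ e M hP μ

end
end

section
/- Let 𝒜 be a finite abelian group of order n, and let S ⊆ 𝒜 satisfy S = S⁻¹ and identity ∉ S. Let G be a finite simple graph and φ a voltage assignment on G with values in 𝒜 (i.e., φ(u₂,u₁) = φ(u₁,u₂)⁻¹ for adjacent pairs), and let G×^φCay(𝒜,S) be the graph on V(G)×𝒜 in which (u₁,a) and (u₂,b) are adjacent iff either u₁ and u₂ are adjacent in G and b = φ(u₁,u₂)·a, or u₁ = u₂ and a⁻¹b ∈ S. Let χ₁, χ₂, …, χ_n be an enumeration of all group homomorphisms 𝒜 → ℂˣ with χ₁ the trivial one, and for each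 i let A_{χᵢ} be the V(G)×V(G) matrix whose (u₁,u₂)-entry is χᵢ(φ(u₁,u₂)) if u₁ and u₂ are adjacent in G and 0 otherwise. Then for all complex λ, μ: F_{G×^φCay(𝒜,S)}(λ,μ) = F_G(λ + |S|(μ−1), μ) · ∏_{i=2}^{n} det( (λ + |S|μ − χᵢ(S))·I_{V(G)} − (A_{χᵢ} − μ·D(G)) ), where χᵢ(S) = Σ_{s∈S} χᵢ(s). -/
/-!
Let `W` be the character table of `A`, `W a c = ψ_c(a)` for an injective family `ψ` of characters;
it is invertible by Dedekind's independence of characters. Since `A` is abelian, the bundle's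
adjacency matrix sends `x ⊗ ψ_c` to `((A_{ψ_c} + ψ_c(S)) x) ⊗ ψ_c`, and its degree matrix is
`(D(G) + |S|) ⊗ 1`. Hence conjugation by `1 ⊗ W` block-diagonalises `λ - (A - μ D)` of the bundle,
with one block per character, and the block of the trivial character is the matrix of
`F_G(λ + |S|(μ - 1), μ)`.
-/

open Matrix BigOperators Kronecker
open scoped Classical

noncomputable section

variable {α β : Type*}

def cayBundle {α A : Type*} [CommGroup A] (G : SimpleGraph α) (S : Finset A)
    (hS : ∀ s ∈ S, s⁻¹ ∈ S) (hid : (1 : A) ∉ S)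
    (φ : α → α → A) (hsym : ∀ u₁ u₂, G.Adj u₁ u₂ → φ u₂ u₁ = (φ u₁ u₂)⁻¹) :
    SimpleGraph (α × A) where
  Adj p q := (G.Adj p.1 q.1 ∧ q.2 = φ p.1 q.1 * p.2) ∨ (p.1 = q.1 ∧ p.2⁻¹ * q.2 ∈ S)
  symm := by
    constructor
    rintro ⟨u₁, a⟩ ⟨u₂, b⟩ hadj
    dsimp only at hadj ⊢
    rcases hadj with ⟨h, rfl⟩ | ⟨rfl, h⟩
    · left
      refine ⟨h.symm, ?_⟩
      rw [hsym _ _ h]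
      exact (inv_mul_cancel_left _ _).symm
    · right
      refine ⟨rfl, ?_⟩
      simpa [_root_.mul_inv_rev] using hS _ h
  loopless := by
    constructor
    rintro ⟨u, a⟩ hadj
    dsimp only at hadj
    rcases hadj with ⟨h, _⟩ | ⟨_, h⟩
    · exact G.irrefl h
    · exact hid (by simpa using h)

def charM {α A : Type*} [Fintype α] [CommGroup A] (G : SimpleGraph α)
    (φ : α → α → A) (χ : A →* ℂˣ) : Matrix α α ℂ :=
  Matrix.of fun u₁ u₂ => if G.Adj u₁ u₂ then (χ (φ u₁ u₂) : ℂ) else 0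

open Function Finset

theorem Matrix.det_eq_det_of_mul_eq_mul {m R : Type*} [Fintype m] [DecidableEq m] [CommRing R]
    {M N P : Matrix m m R} (hP : IsUnit P) (h : M * P = P * N) : M.det = N.det := by
  have hdet := congrArg det h
  rw [det_mul, det_mul, mul_comm] at hdet
  exact ((isUnit_iff_isUnit_det P).mp hP).mul_left_cancel hdet

def charTable {A K : Type*} [Monoid A] [Monoid K] (ψ : A → A →* Kˣ) : Matrix A A K :=
  Matrix.of fun a c => (ψ c a : K)

theorem isUnit_charTable {A K : Type*} [Monoid A] [Fintype A] [Field K] {ψ : A → A →* Kˣ}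
    (hψ : Injective ψ) : IsUnit (charTable ψ) := by
  rw [← linearIndependent_cols_iff_isUnit]
  have hcoe : Injective fun χ : A →* Kˣ => (Units.coeHom K).comp χ := fun χ χ' h =>
    MonoidHom.ext fun a => Units.ext (DFunLike.congr_fun h a)
  exact (linearIndependent_monoidHom A K).comp _ (hcoe.comp hψ)

/-- `Fpoly` was elaborated with the classical `DecidableEq` instance; this frees it from that choice. -/
theorem Fpoly_eq_det {α : Type*} [Fintype α] [DecidableEq α] (G : SimpleGraph α) (lam μ : ℂ) :
    Fpoly G lam μ = (lam • (1 : Matrix α α ℂ) - (adjM G - μ • degM G)).det := by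
  unfold Fpoly
  congr!

theorem charM_one {α A : Type*} [Fintype α] [CommGroup A] (G : SimpleGraph α) (φ : α → α → A) :
    charM G φ 1 = adjM G := by
  ext u v
  simp [charM, adjM]

section cayBundle

variable {α A : Type*} [Fintype α] [CommGroup A] [Fintype A]
  (S : Finset A) (hS : ∀ s ∈ S, s⁻¹ ∈ S) (hid : (1 : A) ∉ S)
  (G : SimpleGraph α) (φ : α → α → A) (hsym : ∀ u₁ u₂, G.Adj u₁ u₂ → φ u₂ u₁ = (φ u₁ u₂)⁻¹)

theorem adjM_cayBundle_apply (u v : α) (a b : A) :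
    adjM (cayBundle G S hS hid φ hsym) (u, a) (v, b) =
      (if G.Adj u v ∧ b = φ u v * a then 1 else 0) + (if u = v ∧ a⁻¹ * b ∈ S then 1 else 0) := by
  by_cases h : G.Adj u v
  · simp [adjM, cayBundle, h, G.ne_of_adj h]
  · simp [adjM, cayBundle, h]

theorem sum_adjM_cayBundle_mul_char (χ : A →* ℂˣ) (u v : α) (a : A) :
    ∑ b, adjM (cayBundle G S hS hid φ hsym) (u, a) (v, b) * χ b
      = χ a * (charM G φ χ u v + if u = v then ∑ s ∈ S, (χ s : ℂ) else 0) := by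
  simp only [adjM_cayBundle_apply, add_mul, sum_add_distrib, ite_mul, one_mul, zero_mul, mul_add]
  congr 1
  · by_cases h : G.Adj u v <;> simp [h, charM, mul_comm]
  · by_cases h : u = v
    · rw [← Equiv.sum_comp (Equiv.mulLeft a)]
      simp [h, Finset.sum_ite_mem, Finset.mul_sum]
    · simp [h]

theorem adjM_cayBundle_mul_kronecker_charTable (ψ : A → A →* ℂˣ) :
    adjM (cayBundle G S hS hid φ hsym) * (1 ⊗ₖ charTable ψ)
      = (1 ⊗ₖ charTable ψ) *
          blockDiagonal fun c => charM G φ (ψ c) + (∑ s ∈ S, (ψ c s : ℂ)) • 1 := by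
  ext ⟨u, a⟩ ⟨v, c⟩
  have hL := sum_adjM_cayBundle_mul_char S hS hid G φ hsym (ψ c) u v a
  simp only [mul_apply, Fintype.sum_prod_type, kronecker_apply, one_apply, blockDiagonal_apply,
    charTable, of_apply, ite_mul, one_mul, zero_mul, mul_ite, mul_zero, sum_ite_eq, sum_ite_eq',
    mem_univ, if_true]
  rw [Finset.sum_comm]
  simp only [sum_ite_eq', mem_univ, if_true]
  rw [hL]
  simp [Matrix.smul_apply, one_apply]

theorem ncard_neighborSet_cayBundle (u : α) (a : A) :
    ((cayBundle G S hS hid φ hsym).neighborSet (u, a)).ncard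
      = (G.neighborSet u).ncard + S.card := by
  have hset : (cayBundle G S hS hid φ hsym).neighborSet (u, a)
      = (fun v => (v, φ u v * a)) '' G.neighborSet u ∪ (fun s => (u, a * s)) '' (S : Set A) := by
    ext ⟨v, b⟩
    simp only [SimpleGraph.mem_neighborSet, cayBundle, Set.mem_union, Set.mem_image,
      Finset.mem_coe, Prod.mk.injEq]
    constructor
    · rintro (⟨hadj, rfl⟩ | ⟨rfl, hs⟩)
      · exact Or.inl ⟨v, hadj, rfl, rfl⟩
      · exact Or.inr ⟨a⁻¹ * b, hs, rfl, mul_inv_cancel_left a b⟩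
    · rintro (⟨w, hw, rfl, rfl⟩ | ⟨s, hs, rfl, rfl⟩)
      · exact Or.inl ⟨hw, rfl⟩
      · exact Or.inr ⟨rfl, by simpa using hs⟩
  have hdisj : Disjoint ((fun v => (v, φ u v * a)) '' G.neighborSet u)
      ((fun s => (u, a * s)) '' (S : Set A)) := by
    rw [Set.disjoint_left]
    rintro _ ⟨w, hw, rfl⟩ ⟨s, -, hs⟩
    exact G.ne_of_adj hw (congrArg Prod.fst hs)
  rw [hset, Set.ncard_union_eq hdisj,
    Set.ncard_image_of_injective _ fun _ _ h => congrArg Prod.fst h,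
    Set.ncard_image_of_injective _ fun _ _ h => mul_left_cancel (congrArg Prod.snd h),
    Set.ncard_coe_finset]

theorem degM_cayBundle :
    degM (cayBundle G S hS hid φ hsym) = (degM G + (S.card : ℂ) • 1) ⊗ₖ 1 := by
  ext ⟨u, a⟩ ⟨v, b⟩
  by_cases huv : u = v <;> by_cases hab : a = b <;>
    simp [degM, one_apply, ncard_neighborSet_cayBundle, huv, hab]

theorem Fpoly_cayBundle {ψ : A → A →* ℂˣ} (hψ : Injective ψ) (lam μ : ℂ) :
    Fpoly (cayBundle G S hS hid φ hsym) lam μ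
      = ∏ c, ((lam + (S.card : ℂ) * μ - ∑ s ∈ S, (ψ c s : ℂ)) • (1 : Matrix α α ℂ)
          - (charM G φ (ψ c) - μ • degM G)).det := by
  set P : Matrix (α × A) (α × A) ℂ := 1 ⊗ₖ charTable ψ
  have hblocks : (blockDiagonal fun c => (lam + (S.card : ℂ) * μ - ∑ s ∈ S, (ψ c s : ℂ)) • 1
        - (charM G φ (ψ c) - μ • degM G))
      = lam • 1 - (blockDiagonal (fun c => charM G φ (ψ c) + (∑ s ∈ S, (ψ c s : ℂ)) • 1)
          - μ • ((degM G + (S.card : ℂ) • 1) ⊗ₖ 1)) := by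
    rw [kronecker_one]
    ext ⟨u, a⟩ ⟨v, c⟩
    by_cases hac : a = c
    · subst hac
      by_cases huv : u = v
      · subst huv
        simp only [blockDiagonal_apply, if_true, Matrix.sub_apply, Matrix.smul_apply,
          one_apply_eq, smul_eq_mul, mul_one, Matrix.add_apply]
        ring
      · simp [blockDiagonal_apply, one_apply, huv]
    · simp [blockDiagonal_apply, hac]
  have hdeg_commute :
      (degM G + (S.card : ℂ) • 1) ⊗ₖ 1 * P = P * ((degM G + (S.card : ℂ) • 1) ⊗ₖ 1) := by
    simp only [P, ← mul_kronecker_mul, one_mul, mul_one]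
  rw [Fpoly_eq_det, ← det_blockDiagonal, hblocks]
  refine det_eq_det_of_mul_eq_mul (isUnit_one.kronecker (isUnit_charTable hψ)) ?_
  rw [sub_mul, sub_mul, smul_mul, smul_mul, one_mul, adjM_cayBundle_mul_kronecker_charTable,
    degM_cayBundle, hdeg_commute, mul_sub, mul_sub, Matrix.mul_smul, Matrix.mul_smul, mul_one]

end cayBundle

theorem genCharPoly_of_cayley_bundle
    {α A : Type*} [Fintype α] [CommGroup A] [Fintype A]
    (n : ℕ) (hcard : Fintype.card A = n) (hn0 : 0 < n)
    (S : Finset A) (hS : ∀ s ∈ S, s⁻¹ ∈ S) (hid : (1 : A) ∉ S)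
    (G : SimpleGraph α) (φ : α → α → A)
    (hsym : ∀ u₁ u₂, G.Adj u₁ u₂ → φ u₂ u₁ = (φ u₁ u₂)⁻¹)
    (χ : Fin n → (A →* ℂˣ)) (hχ : Function.Bijective χ)
    (hχ1 : χ ⟨0, hn0⟩ = 1)
    (lam μ : ℂ) :
    Fpoly (cayBundle G S hS hid φ hsym) lam μ
      = Fpoly G (lam + (S.card : ℂ) * (μ - 1)) μ *
          ∏ i ∈ Finset.univ.erase ⟨0, hn0⟩,
            Matrix.det
              ((lam + (S.card : ℂ) * μ - ∑ s ∈ S, ((χ i s : ℂˣ) : ℂ))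
                  • (1 : Matrix α α ℂ)
                - (charM G φ (χ i) - μ • degM G)) := by
  let e : A ≃ Fin n := Fintype.equivFinOfCardEq hcard
  rw [Fpoly_cayBundle S hS hid G φ hsym (ψ := fun a => χ (e a)) (hχ.injective.comp e.injective),
    e.prod_comp fun i => ((lam + (S.card : ℂ) * μ - ∑ s ∈ S, ((χ i s : ℂˣ) : ℂ)) • 1
      - (charM G φ (χ i) - μ • degM G)).det,
    ← mul_prod_erase univ _ (mem_univ ⟨0, hn0⟩), hχ1, charM_one, Fpoly]
  congr 3
  simp only [MonoidHom.one_apply, Units.val_one, sum_const, nsmul_eq_mul, mul_one]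
  rw [mul_sub_one, add_sub_assoc]
end
end

section
/- For all natural numbers s, t ≥ 1 and all complex λ, μ, the generalized characteristic polynomial of the complete bipartite graph K_{s,t} satisfies F_{K_{s,t}}(λ,μ) = (λ + tμ)^{s−1} (λ + sμ)^{t−1} [ (λ + sμ)(λ + tμ) − st ]. -/
open Matrix BigOperators Kronecker
open scoped Classical

noncomputable section

variable {α β : Type*}

/-!
With `a = λ + tμ` and `b = λ + sμ`, the matrix `λI − A + μD` of `K_{s,t}` is the block matrix
`[[a I, −J], [−J, b I]]` with all-ones blocks `J`. Left-multiplying it by `[[I, 0], [J, a I]]`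
makes it block upper triangular with diagonal blocks `a I` and `ab I − s J`; since `J` has rank
one, `det (ab I − s J) = (ab)^(t−1) (ab − st)`. Cancelling the factor `a^t` requires `a ≠ 0`, so
the computation is carried out for the characteristic polynomial of `A − μD`, where `a` becomes
the nonzero polynomial `X + tμ`, and then evaluated at `λ`.
-/

open Polynomial

section Blocks

variable {R m n : Type*} [CommRing R] [Fintype m] [Fintype n] [DecidableEq m] [DecidableEq n]

theorem det_smul_one_sub_smul_ones [Nonempty n] (x c : R) :
    (x • (1 : Matrix n n R) - c • of fun _ _ => 1).det
      = x ^ (Fintype.card n - 1) * (x - Fintype.card n * c) := by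
  have hJ : (c • of fun _ _ => 1 : Matrix n n R) = vecMulVec (fun _ => c) 1 := by
    ext i j
    simp [vecMulVec]
  rw [hJ, smul_one_eq_diagonal, ← scalar_apply, ← eval_charpoly, charpoly_vecMulVec]
  obtain ⟨k, hk⟩ := Nat.exists_eq_add_one_of_ne_zero (Fintype.card_ne_zero (α := n))
  simp only [eval_sub, eval_smul, eval_pow, eval_X, smul_eq_mul, dotProduct, Pi.one_apply,
    mul_one, Finset.sum_const, Finset.card_univ, nsmul_eq_mul, hk]
  push_cast
  ring

theorem det_fromBlocks_smul_one_neg_ones [IsDomain R] [Nonempty m] [Nonempty n] {a : R}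
    (ha : a ≠ 0) (b : R) :
    (fromBlocks (a • 1) (-of fun _ _ => 1) (-of fun _ _ => 1) (b • 1) :
        Matrix (m ⊕ n) (m ⊕ n) R).det
      = a ^ (Fintype.card m - 1) * b ^ (Fintype.card n - 1)
          * (a * b - Fintype.card m * Fintype.card n) := by
  set M : Matrix (m ⊕ n) (m ⊕ n) R :=
    fromBlocks (a • 1) (-of fun _ _ => 1) (-of fun _ _ => 1) (b • 1)
  have hLM : fromBlocks 1 0 (of fun _ _ => 1) (a • 1) * M
      = fromBlocks (a • 1) (-of fun _ _ => 1) 0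
          ((a * b) • 1 - (Fintype.card m : R) • of fun _ _ => 1) := by
    simp only [M, fromBlocks_multiply]
    congr 1 <;> ext i j <;> simp [Matrix.mul_apply, Matrix.one_apply]
    split_ifs <;> ring
  have hdet := congrArg det hLM
  rw [det_mul, det_fromBlocks_zero₁₂, det_fromBlocks_zero₂₁, det_smul_one_sub_smul_ones] at hdet
  simp only [det_one, det_smul, one_mul, mul_one] at hdet
  obtain ⟨p, hp⟩ := Nat.exists_eq_add_one_of_ne_zero (Fintype.card_ne_zero (α := m))
  obtain ⟨q, hq⟩ := Nat.exists_eq_add_one_of_ne_zero (Fintype.card_ne_zero (α := n))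
  apply mul_left_cancel₀ (pow_ne_zero (Fintype.card n) ha)
  rw [hdet, hp, hq]
  push_cast
  ring

theorem charpoly_fromBlocks_smul_one_ones [IsDomain R] [Nonempty m] [Nonempty n] (c d : R) :
    (fromBlocks (c • 1) (of fun _ _ => 1) (of fun _ _ => 1) (d • 1) :
        Matrix (m ⊕ n) (m ⊕ n) R).charpoly
      = (X - C c) ^ (Fintype.card m - 1) * (X - C d) ^ (Fintype.card n - 1)
          * ((X - C c) * (X - C d) - (Fintype.card m : R[X]) * (Fintype.card n : R[X])) := by
  have hchar : charmatrix (fromBlocks (c • 1) (of fun _ _ => 1) (of fun _ _ => 1) (d • 1) :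
        Matrix (m ⊕ n) (m ⊕ n) R)
      = fromBlocks ((X - C c) • 1) (-of fun _ _ => 1) (-of fun _ _ => 1) ((X - C d) • 1) := by
    ext (i | i) (j | j) : 1 <;> simp [charmatrix_apply, one_apply, diagonal_apply]
    all_goals split_ifs <;> simp
  rw [charpoly, hchar, det_fromBlocks_smul_one_neg_ones (X_sub_C_ne_zero c)]

end Blocks

theorem Fpoly_eq_eval_charpoly {V : Type*} [Fintype V] [DecidableEq V] (G : SimpleGraph V)
    (lam μ : ℂ) : Fpoly G lam μ = (adjM G - μ • degM G).charpoly.eval lam := by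
  rw [eval_charpoly, scalar_apply, ← smul_one_eq_diagonal, Fpoly]
  congr!

section CompleteBipartite

variable {V W : Type*}

theorem ncard_neighborSet_inl_completeBipartiteGraph [Fintype W] (v : V) :
    ((completeBipartiteGraph V W).neighborSet (Sum.inl v)).ncard = Fintype.card W := by
  have h : (completeBipartiteGraph V W).neighborSet (Sum.inl v) = Set.range Sum.inr := by
    ext (w | w) <;> simp
  rw [h, Set.ncard_range_of_injective Sum.inr_injective, Nat.card_eq_fintype_card]

theorem ncard_neighborSet_inr_completeBipartiteGraph [Fintype V] (w : W) :
    ((completeBipartiteGraph V W).neighborSet (Sum.inr w)).ncard = Fintype.card V := by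
  have h : (completeBipartiteGraph V W).neighborSet (Sum.inr w) = Set.range Sum.inl := by
    ext (v | v) <;> simp
  rw [h, Set.ncard_range_of_injective Sum.inl_injective, Nat.card_eq_fintype_card]

theorem adjM_sub_smul_degM_completeBipartiteGraph [Fintype V] [Fintype W] [DecidableEq V]
    [DecidableEq W] (μ : ℂ) :
    adjM (completeBipartiteGraph V W) - μ • degM (completeBipartiteGraph V W)
      = fromBlocks ((-(Fintype.card W * μ)) • 1) (of fun _ _ => 1) (of fun _ _ => 1)
          ((-(Fintype.card V * μ)) • 1) := by
  ext (i | i) (j | j) <;>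
    simp [adjM, degM, one_apply, diagonal_apply, mul_comm μ,
      ncard_neighborSet_inl_completeBipartiteGraph, ncard_neighborSet_inr_completeBipartiteGraph]

end CompleteBipartite

theorem genCharPoly_of_completeBipartite
    (s t : ℕ) (hs : 1 ≤ s) (ht : 1 ≤ t) (lam μ : ℂ) :
    Fpoly (completeBipartiteGraph (Fin s) (Fin t)) lam μ
      = (lam + (t : ℂ) * μ) ^ (s - 1) * (lam + (s : ℂ) * μ) ^ (t - 1) *
          ((lam + (s : ℂ) * μ) * (lam + (t : ℂ) * μ) - (s : ℂ) * (t : ℂ)) := by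
  have : NeZero s := ⟨by omega⟩
  have : NeZero t := ⟨by omega⟩
  rw [Fpoly_eq_eval_charpoly, adjM_sub_smul_degM_completeBipartiteGraph,
    charpoly_fromBlocks_smul_one_ones]
  simp only [eval_mul, eval_pow, eval_sub, eval_X, eval_C, eval_natCast, Fintype.card_fin]
  ring

end
end

section
/- For all natural numbers m, n ≥ 1 and all complex λ, μ, the generalized characteristic polynomial of the Cartesian (box) product K_{1,m}□K_n of the star K_{1,m} and the complete graph K_n satisfies F_{K_{1,m}□K_n}(λ,μ) = [λ + nμ − (n−1)]^{m−1} · { [λ + nμ − (n−1)][λ + (m+n−1)μ − (n−1)] − m } · [λ + nμ + 1]^{(m−1)(n−1)} · { [λ + nμ + 1][λ + (m+n−1)μ + 1] − m }^{n−1}. -/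
open Matrix BigOperators Kronecker
open scoped Classical

noncomputable section

variable {α β : Type*}

/-! The matrix `λI - (A - μD)` of `G □ K_n` is the Kronecker sum of the same matrix for `G` and
`μ(n - 1)I - (J - I)`, with `J` the all-ones matrix. Conjugating by an eigenbasis of `J`
(eigenvalue `n` once, `0` with multiplicity `n - 1`) makes it block diagonal, so
`F_{G □ K_n}(λ, μ)` is a product of `n` values of `F_G` at shifted `λ`. For the star,
`λI - (A - μD)` is an arrowhead matrix, whose determinant is a Schur complement when the leaf
diagonal is nonzero and follows by continuity in general. -/

namespace Matrix

section KroneckerSum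

variable {R ι κ : Type*} [CommRing R] [Fintype ι] [DecidableEq ι] [Fintype κ] [DecidableEq κ]

theorem det_kronecker_one_add_one_kronecker_diagonal (A : Matrix ι ι R) (d : κ → R) :
    (A ⊗ₖ (1 : Matrix κ κ R) + 1 ⊗ₖ diagonal d).det = ∏ k, (A + d k • 1).det := by
  simp only [kronecker_one, kronecker_diagonal, ← blockDiagonal_add, det_blockDiagonal,
    op_smul_eq_smul, Pi.add_apply]

theorem det_kronecker_one_add_one_kronecker_of_mul_eq_mul_diagonal (A : Matrix ι ι R)
    {B P Q : Matrix κ κ R} {d : κ → R} (hQP : Q * P = 1) (hBP : B * P = P * diagonal d) :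
    (A ⊗ₖ (1 : Matrix κ κ R) + 1 ⊗ₖ B).det = ∏ k, (A + d k • 1).det := by
  have hconj : (1 ⊗ₖ Q) * (A ⊗ₖ 1 + 1 ⊗ₖ B) * (1 ⊗ₖ P) = A ⊗ₖ 1 + 1 ⊗ₖ diagonal d := by
    simp only [Matrix.mul_add, Matrix.add_mul, ← mul_kronecker_mul, Matrix.one_mul,
      Matrix.mul_one, hQP, Matrix.mul_assoc, hBP, ← Matrix.mul_assoc Q P]
  have hdet : ((1 : Matrix ι ι R) ⊗ₖ Q).det * ((1 : Matrix ι ι R) ⊗ₖ P).det = 1 := by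
    rw [← det_mul, ← mul_kronecker_mul, Matrix.one_mul, hQP, one_kronecker_one, det_one]
  rw [← det_kronecker_one_add_one_kronecker_diagonal, ← hconj, det_mul, det_mul]
  linear_combination -(A ⊗ₖ (1 : Matrix κ κ R) + 1 ⊗ₖ B).det * hdet

end KroneckerSum

section AllOnes

variable {K : Type*} [Field K] (n : ℕ) [NeZero n]

/-- Column `0` is the all-ones vector, column `j ≠ 0` is `e_j - e_0`. -/
def allOnesEigenvectors : Matrix (Fin n) (Fin n) K :=
  of fun k j => if j = 0 then 1 else (if k = j then 1 else 0) - (if k = 0 then 1 else 0)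

def allOnesEigenvectorsInv : Matrix (Fin n) (Fin n) K :=
  of fun i k => if i = 0 then (n : K)⁻¹ else (if i = k then 1 else 0) - (n : K)⁻¹

theorem allOnes_mul_allOnesEigenvectors :
    (of fun _ _ => 1 : Matrix (Fin n) (Fin n) K) * allOnesEigenvectors n
      = allOnesEigenvectors n * diagonal (Pi.single 0 (n : K)) := by
  ext k j
  rw [mul_diagonal, mul_apply]
  by_cases hj : j = 0 <;> simp [allOnesEigenvectors, hj, Finset.sum_sub_distrib]

theorem allOnesEigenvectorsInv_mul_allOnesEigenvectors (hn : (n : K) ≠ 0) :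
    allOnesEigenvectorsInv n * allOnesEigenvectors n = (1 : Matrix (Fin n) (Fin n) K) := by
  ext i j
  by_cases hi : i = 0 <;> by_cases hj : j = 0 <;>
    simp [allOnesEigenvectors, allOnesEigenvectorsInv, mul_apply, one_apply, hi, hj, hn,
      eq_comm (a := (0 : Fin n)), Finset.sum_sub_distrib, mul_sub]

end AllOnes

section Arrowhead

variable {ι : Type*} [Fintype ι] [DecidableEq ι]

theorem det_fromBlocks_const_smul_one_of_ne_zero (a x y : ℂ) {b : ℂ} (hb : b ≠ 0) :
    (fromBlocks (of fun _ _ => a : Matrix (Fin 1) (Fin 1) ℂ) (of fun _ _ => x) (of fun _ _ => y)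
        (b • 1 : Matrix ι ι ℂ)).det
      = b ^ Fintype.card ι * a - Fintype.card ι * x * y * b ^ (Fintype.card ι - 1) := by
  let _ : Invertible (b • 1 : Matrix ι ι ℂ) :=
    ⟨b⁻¹ • 1, by simp [smul_smul, hb], by simp [smul_smul, hb]⟩
  rw [det_fromBlocks₂₂, show ⅟(b • 1 : Matrix ι ι ℂ) = b⁻¹ • 1 from rfl, det_smul, det_one,
    mul_one, det_unique]
  simp only [Matrix.mul_smul, Matrix.mul_one, smul_of, Matrix.sub_apply, of_apply, mul_apply,
    Pi.smul_apply, smul_eq_mul, Finset.sum_const, Finset.card_univ, nsmul_eq_mul]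
  generalize Fintype.card ι = k
  cases k with
  | zero => simp
  | succ k =>
    rw [Nat.add_sub_cancel, pow_succ]
    field_simp

theorem det_fromBlocks_const_smul_one (a x y b : ℂ) :
    (fromBlocks (of fun _ _ => a : Matrix (Fin 1) (Fin 1) ℂ) (of fun _ _ => x) (of fun _ _ => y)
        (b • 1 : Matrix ι ι ℂ)).det
      = b ^ Fintype.card ι * a - Fintype.card ι * x * y * b ^ (Fintype.card ι - 1) := by
  suffices h : (fun b : ℂ => (fromBlocks (of fun _ _ => a : Matrix (Fin 1) (Fin 1) ℂ)
      (of fun _ _ => x) (of fun _ _ => y) (b • 1 : Matrix ι ι ℂ)).det)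
        = fun b => b ^ Fintype.card ι * a - Fintype.card ι * x * y * b ^ (Fintype.card ι - 1) from
    congrFun h b
  exact Continuous.ext_on (dense_compl_singleton 0) (by fun_prop) (by fun_prop)
    fun b hb => det_fromBlocks_const_smul_one_of_ne_zero a x y hb

end Arrowhead

end Matrix

namespace SimpleGraph

variable [Fintype α] [Fintype β]

theorem ncard_neighborSet_boxProd (G : SimpleGraph α) (F : SimpleGraph β) (x : α × β) :
    ((G □ F).neighborSet x).ncard = (G.neighborSet x.1).ncard + (F.neighborSet x.2).ncard := by
  simp only [Set.ncard_eq_toFinset_card', Set.toFinset_card, card_neighborSet_eq_degree,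
    degree_boxProd]

theorem ncard_neighborSet_completeBipartiteGraph (v : α ⊕ β) :
    ((completeBipartiteGraph α β).neighborSet v).ncard
      = Sum.elim (fun _ => Fintype.card β) (fun _ => Fintype.card α) v := by
  rcases v with a | b
  · have : (completeBipartiteGraph α β).neighborSet (Sum.inl a) = Set.range Sum.inr := by
      ext w; cases w <;> simp
    rw [this, Set.ncard_range_of_injective Sum.inr_injective, Nat.card_eq_fintype_card,
      Sum.elim_inl]
  · have : (completeBipartiteGraph α β).neighborSet (Sum.inr b) = Set.range Sum.inl := by
      ext w; cases w <;> simp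
    rw [this, Set.ncard_range_of_injective Sum.inl_injective, Nat.card_eq_fintype_card,
      Sum.elim_inr]

end SimpleGraph

def genCharMatrix [Fintype α] (G : SimpleGraph α) (lam mu : ℂ) : Matrix α α ℂ :=
  lam • 1 - (adjM G - mu • degM G)

section GenCharMatrix

variable [Fintype α] [Fintype β]

/-- Stated for any `DecidableEq` instance: `Fpoly` takes the determinant with the classical one. -/
theorem Fpoly_eq_det_genCharMatrix [DecidableEq α] (G : SimpleGraph α) (lam mu : ℂ) :
    Fpoly G lam mu = (genCharMatrix G lam mu).det := by
  rw [Fpoly, genCharMatrix]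
  congr!

theorem genCharMatrix_add_smul_one (G : SimpleGraph α) (lam mu c : ℂ) :
    genCharMatrix G lam mu + c • 1 = genCharMatrix G (lam + c) mu := by
  rw [genCharMatrix, genCharMatrix, add_smul]
  abel

theorem genCharMatrix_boxProd [DecidableEq α] [DecidableEq β] (G : SimpleGraph α)
    (F : SimpleGraph β) (lam lam' mu : ℂ) :
    genCharMatrix (G □ F) (lam + lam') mu
      = genCharMatrix G lam mu ⊗ₖ 1 + 1 ⊗ₖ genCharMatrix F lam' mu := by
  ext ⟨u, i⟩ ⟨v, j⟩
  by_cases huv : u = v <;> by_cases hij : i = j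
  · subst huv hij
    simp only [genCharMatrix, adjM, degM, SimpleGraph.boxProd_adj,
      SimpleGraph.ncard_neighborSet_boxProd, Nat.cast_add, Matrix.add_apply, Matrix.sub_apply,
      Matrix.smul_apply, kroneckerMap_apply, of_apply, one_apply_eq, diagonal_apply_eq,
      SimpleGraph.irrefl, and_true, or_self, if_false, smul_eq_mul]
    ring
  all_goals simp [genCharMatrix, adjM, degM, SimpleGraph.boxProd_adj, one_apply, huv, hij]

end GenCharMatrix

section CompleteGraph

variable (n : ℕ) [NeZero n]

theorem genCharMatrix_top (lam mu : ℂ) :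
    genCharMatrix (⊤ : SimpleGraph (Fin n)) lam mu
      = (lam + ((n : ℂ) - 1) * mu + 1) • 1 - of fun _ _ => 1 := by
  have hdeg (v : Fin n) : (({v}ᶜ : Set (Fin n)).ncard : ℂ) = n - 1 := by
    rw [Set.ncard_compl, Set.ncard_singleton, Nat.card_eq_fintype_card, Fintype.card_fin,
      Nat.cast_pred (NeZero.pos n)]
  ext u v
  by_cases huv : u = v
  · subst huv
    simp [genCharMatrix, adjM, degM, hdeg, mul_comm]
  · simp [genCharMatrix, adjM, degM, one_apply, huv]

theorem genCharMatrix_top_mul_allOnesEigenvectors (lam mu : ℂ) :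
    genCharMatrix (⊤ : SimpleGraph (Fin n)) lam mu * allOnesEigenvectors n
      = allOnesEigenvectors n *
          diagonal fun j => lam + ((n : ℂ) - 1) * mu + 1 - (Pi.single 0 (n : ℂ) : Fin n → ℂ) j := by
  rw [genCharMatrix_top, sub_mul, allOnes_mul_allOnesEigenvectors, ← diagonal_sub, mul_sub,
    smul_mul, Matrix.one_mul, ← smul_one_eq_diagonal, Matrix.mul_smul, Matrix.mul_one]

theorem Fpoly_boxProd_top [Fintype α] (G : SimpleGraph α) (lam mu : ℂ) :
    Fpoly (G □ (⊤ : SimpleGraph (Fin n))) lam mu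
      = Fpoly G (lam + ((n : ℂ) - 1) * mu - ((n : ℂ) - 1)) mu
          * Fpoly G (lam + ((n : ℂ) - 1) * mu + 1) mu ^ (n - 1) := by
  conv_lhs => rw [Fpoly_eq_det_genCharMatrix, ← add_zero lam, genCharMatrix_boxProd]
  rw [det_kronecker_one_add_one_kronecker_of_mul_eq_mul_diagonal _
      (allOnesEigenvectorsInv_mul_allOnesEigenvectors n (NeZero.ne _))
      (genCharMatrix_top_mul_allOnesEigenvectors n 0 mu),
    Fintype.prod_eq_mul_prod_compl 0]
  simp only [genCharMatrix_add_smul_one, ← Fpoly_eq_det_genCharMatrix, Pi.single_eq_same]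
  rw [Finset.prod_congr rfl fun k hk => by rw [Pi.single_eq_of_ne (by simpa using hk)],
    Finset.prod_const, Finset.card_compl, Finset.card_singleton, Fintype.card_fin]
  congr 3 <;> ring

end CompleteGraph

section Star

variable {ι : Type*} [Fintype ι]

theorem genCharMatrix_completeBipartiteGraph [DecidableEq ι] (lam mu : ℂ) :
    genCharMatrix (completeBipartiteGraph (Fin 1) ι) lam mu
      = fromBlocks (of fun _ _ => lam + Fintype.card ι * mu) (of fun _ _ => -1)
          (of fun _ _ => -1) ((lam + mu) • 1) := by
  ext (x | i) (y | j)
  · simp [genCharMatrix, adjM, degM, SimpleGraph.ncard_neighborSet_completeBipartiteGraph,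
      Subsingleton.elim x y, mul_comm]
  · simp [genCharMatrix, adjM, degM]
  · simp [genCharMatrix, adjM, degM]
  · by_cases hij : i = j <;>
      simp [genCharMatrix, adjM, degM, SimpleGraph.ncard_neighborSet_completeBipartiteGraph,
        one_apply, hij]

theorem Fpoly_completeBipartiteGraph [Nonempty ι] (lam mu : ℂ) :
    Fpoly (completeBipartiteGraph (Fin 1) ι) lam mu
      = (lam + mu) ^ (Fintype.card ι - 1)
          * ((lam + mu) * (lam + Fintype.card ι * mu) - Fintype.card ι) := by
  classical
  rw [Fpoly_eq_det_genCharMatrix, genCharMatrix_completeBipartiteGraph,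
    det_fromBlocks_const_smul_one]
  obtain ⟨k, hk⟩ := Nat.exists_eq_add_one_of_ne_zero (Fintype.card_ne_zero (α := ι))
  rw [hk, Nat.add_sub_cancel]
  push_cast
  ring

end Star

theorem genCharPoly_of_star_boxProd_completeGraph
    (m n : ℕ) (hm : 1 ≤ m) (hn : 1 ≤ n) (lam μ : ℂ) :
    Fpoly ((completeBipartiteGraph (Fin 1) (Fin m)).boxProd (⊤ : SimpleGraph (Fin n))) lam μ
      = (lam + (n : ℂ) * μ - ((n : ℂ) - 1)) ^ (m - 1) *
          ((lam + (n : ℂ) * μ - ((n : ℂ) - 1)) *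
              (lam + ((m : ℂ) + (n : ℂ) - 1) * μ - ((n : ℂ) - 1)) - (m : ℂ)) *
          (lam + (n : ℂ) * μ + 1) ^ ((m - 1) * (n - 1)) *
          ((lam + (n : ℂ) * μ + 1) *
              (lam + ((m : ℂ) + (n : ℂ) - 1) * μ + 1) - (m : ℂ)) ^ (n - 1) := by
  have : NeZero m := ⟨by omega⟩
  have : NeZero n := ⟨by omega⟩
  rw [Fpoly_boxProd_top, Fpoly_completeBipartiteGraph, Fpoly_completeBipartiteGraph,
    Fintype.card_fin, mul_pow, ← pow_mul]
  ring
end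
end

section
/- Let G be a finite simple graph with ν_G vertices. Then for all complex numbers u and t with t ≠ 0: t^{ν_G} · F_G( 1/t − (1−u)²·t , (1−u)·t ) = det( I − t·A(G) + (1−u)·t²·(D(G) − (1−u)·I) ). Consequently, the reciprocal of the Bartholdi zeta function Z_G(u,t)^{-1} = (1−(1−u)²t²)^{ε_G−ν_G} · det(I − t·A(G) + (1−u)t²(D(G)−(1−u)I)) equals (1−(1−u)²t²)^{ε_G−ν_G} · t^{ν_G} · F_G(1/t − (1−u)²t, (1−u)t). -/
open Matrix BigOperators Kronecker
open scoped Classical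

noncomputable section

variable {α β : Type*}

theorem Matrix.smul_genCharMatrix_eq_bartholdiMatrix {K n : Type*} [Field K] [Fintype n]
    [DecidableEq n] (A D : Matrix n n K) (a : K) {t : K} (ht : t ≠ 0) :
    t • ((1 / t - a ^ 2 * t) • (1 : Matrix n n K) - (A - (a * t) • D))
      = 1 - t • A + (a * t ^ 2) • (D - a • (1 : Matrix n n K)) := by
  match_scalars <;> field_simp; ring

theorem pow_card_mul_Fpoly {V : Type*} [Fintype V] (G : SimpleGraph V) (a : ℂ) {t : ℂ}
    (ht : t ≠ 0) :
    t ^ Fintype.card V * Fpoly G (1 / t - a ^ 2 * t) (a * t)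
      = ((1 : Matrix V V ℂ) - t • adjM G + (a * t ^ 2) • (degM G - a • (1 : Matrix V V ℂ))).det := by
  rw [Fpoly, ← det_smul, smul_genCharMatrix_eq_bartholdiMatrix _ _ _ ht]

theorem bartholdi_zeta_from_genCharPoly
    {V : Type*} [Fintype V] (G : SimpleGraph V) (u t : ℂ) (ht : t ≠ 0) :
    t ^ (Fintype.card V) * Fpoly G (1 / t - (1 - u) ^ 2 * t) ((1 - u) * t)
        = ((1 : Matrix V V ℂ) - t • adjM G
            + ((1 - u) * t ^ 2) • (degM G - (1 - u) • (1 : Matrix V V ℂ))).det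
      ∧ (1 - (1 - u) ^ 2 * t ^ 2) ^ ((G.edgeSet.ncard : ℤ) - (Fintype.card V : ℤ)) *
          ((1 : Matrix V V ℂ) - t • adjM G
            + ((1 - u) * t ^ 2) • (degM G - (1 - u) • (1 : Matrix V V ℂ))).det
        = (1 - (1 - u) ^ 2 * t ^ 2) ^ ((G.edgeSet.ncard : ℤ) - (Fintype.card V : ℤ)) *
            (t ^ (Fintype.card V) * Fpoly G (1 / t - (1 - u) ^ 2 * t) ((1 - u) * t)) := by
  have hF := pow_card_mul_Fpoly G (1 - u) ht
  exact ⟨hF, by rw [hF]⟩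

end
end

section
/- Let G be a finite simple graph with ν_G vertices and ε_G edges. Then for all complex λ and all complex μ with μ² ≠ 1 and λ ≠ 0: F_G(λ,μ) = (λ^{ν_G} / (1−μ²)^{ε_G}) · det( I − (1−μ²)/λ · A(G) + (1 − λμ/(1−μ²)) · ((1−μ²)/λ)² · (D(G) − (1 − λμ/(1−μ²))·I) ) · (1 − (1 − λμ/(1−μ²))²·((1−μ²)/λ)²)^{ε_G−ν_G}; that is, F_G(λ,μ) = (λ^{ν_G}/(1−μ²)^{ε_G}) · Z_G(1 − λμ/(1−μ²), (1−μ²)/λ)^{-1}, where Z_G(u,t)^{-1} = (1−(1−u)²t²)^{ε_G−ν_G} · det(I − t·A(G) + (1−u)t²(D(G)−(1−u)I)). -/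
/-! With `t = (1 - μ²)/λ` and `1 - u = λμ/(1 - μ²)` one has `(1 - u) t = μ` and
`t λ = 1 - (1 - u)² t² = 1 - μ²`. Under these two relations Bartholdi's matrix
`I - tA + (1 - u) t² (D - (1 - u) I)` is exactly `t (λI - (A - μD))`, so its determinant is
`t^ν F_G(λ, μ)`, and the prefactor `λ^ν / (1 - μ²)^ε` cancels `t^ν (1 - μ²)^(ε - ν)`. -/

open Matrix BigOperators Kronecker
open scoped Classical

noncomputable section

variable {α β : Type*}

theorem Matrix.one_sub_smul_add_smul_eq_smul {n R : Type*} [DecidableEq n] [CommRing R]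
    (A D : Matrix n n R) {s t lam μ : R}
    (hμ : s * t = μ) (hlam : t * lam = 1 - s ^ 2 * t ^ 2) :
    1 - t • A + (s * t ^ 2) • (D - s • 1) = t • (lam • 1 - (A - μ • D)) := by
  subst hμ
  match_scalars
  · linear_combination -hlam
  all_goals ring

def bartholdiZetaInv [Fintype α] (G : SimpleGraph α) (u t : ℂ) : ℂ :=
  (1 - (1 - u) ^ 2 * t ^ 2) ^ ((G.edgeSet.ncard : ℤ) - (Fintype.card α : ℤ)) *
    ((1 : Matrix α α ℂ) - t • adjM G
      + ((1 - u) * t ^ 2) • (degM G - (1 - u) • (1 : Matrix α α ℂ))).det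

theorem bartholdiZetaInv_eq_mul_Fpoly [Fintype α] (G : SimpleGraph α) {u t lam μ : ℂ}
    (hμ : (1 - u) * t = μ) (hlam : t * lam = 1 - (1 - u) ^ 2 * t ^ 2) :
    bartholdiZetaInv G u t =
      (t * lam) ^ ((G.edgeSet.ncard : ℤ) - (Fintype.card α : ℤ)) *
        (t ^ Fintype.card α * Fpoly G lam μ) := by
  rw [bartholdiZetaInv, Fpoly, ← det_smul, hlam, one_sub_smul_add_smul_eq_smul _ _ hμ hlam]

theorem genCharPoly_from_bartholdi_zeta
    {V : Type*} [Fintype V] (G : SimpleGraph V) (lam μ : ℂ)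
    (hμ : μ ^ 2 ≠ 1) (hlam : lam ≠ 0) :
    Fpoly G lam μ
      = (lam ^ (Fintype.card V) / (1 - μ ^ 2) ^ G.edgeSet.ncard) *
          ((1 - (1 - (1 - lam * μ / (1 - μ ^ 2))) ^ 2 * ((1 - μ ^ 2) / lam) ^ 2)
              ^ ((G.edgeSet.ncard : ℤ) - (Fintype.card V : ℤ)) *
            ((1 : Matrix V V ℂ) - ((1 - μ ^ 2) / lam) • adjM G
              + ((1 - (1 - lam * μ / (1 - μ ^ 2))) * ((1 - μ ^ 2) / lam) ^ 2) •
                  (degM G - (1 - (1 - lam * μ / (1 - μ ^ 2))) • (1 : Matrix V V ℂ))).det) := by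
  have hc : 1 - μ ^ 2 ≠ 0 := sub_ne_zero.mpr hμ.symm
  have hst : (1 - (1 - lam * μ / (1 - μ ^ 2))) * ((1 - μ ^ 2) / lam) = μ := by
    field_simp
    ring
  have htlam : (1 - μ ^ 2) / lam * lam = 1 - μ ^ 2 := div_mul_cancel₀ _ hlam
  have hZ := bartholdiZetaInv_eq_mul_Fpoly G hst (by rw [htlam, ← mul_pow, hst])
  rw [← bartholdiZetaInv, hZ, htlam, zpow_sub₀ hc, zpow_natCast, zpow_natCast, div_pow]
  field_simp

end
end
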